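/- arXiv:1803.00281 — 2 statements merged into one kernel-verified Lean document; each statement's English description precedes it below -/
import Mathlib

section
/- For any digraph D and integers 2 ≤ k ≤ n, κ_k(D) ≤ min{δ⁻(D), δ⁺(D)}, where δ⁻(D) and δ⁺(D) are the minimum in-degree and minimum out-degree of D. -/
/-- A digraph on vertex type `V`: a loopless binary arc relation. -/
structure Dgraph (V : Type) where
  Arc : V → V → Prop
  loopless : ∀ v, ¬ Arc v v

namespace Dgraph

variable {V : Type}

/-- A digraph is strong (strongly connected) if every vertex reaches every vertex. -/
def IsStrong (D : Dgraph V) : Prop := ∀ u v : V, Relation.ReflTransGen D.Arc u v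

/-- A strong subgraph of `D`: a vertex set together with an arc relation contained
in `D`'s arcs, whose arcs stay inside the vertex set, and which is strongly
connected on its vertex set. -/
structure StrongSub (D : Dgraph V) where
  verts : Set V
  Arc : V → V → Prop
  arc_sub : ∀ u v, Arc u v → D.Arc u v
  arc_mem : ∀ u v, Arc u v → u ∈ verts ∧ v ∈ verts
  strong : ∀ u ∈ verts, ∀ v ∈ verts, Relation.ReflTransGen Arc u v

/-- `κ_S(D)`: the maximum number of pairwise internally disjoint strong subgraphs
of `D` containing `S` (they share exactly the vertices of `S` and no arcs). -/
noncomputable def kappaS (D : Dgraph V) (S : Set V) : ℕ :=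
  sSup {p : ℕ | ∃ f : Fin p → StrongSub D,
    (∀ i, S ⊆ (f i).verts) ∧
    (∀ i j, i ≠ j → (f i).verts ∩ (f j).verts = S) ∧
    (∀ i j, i ≠ j → ∀ u v, ¬ ((f i).Arc u v ∧ (f j).Arc u v))}

/-- The strong subgraph `k`-connectivity `κ_k(D)`. -/
noncomputable def kappa [Fintype V] (D : Dgraph V) (k : ℕ) : ℕ :=
  sInf {m : ℕ | ∃ S : Finset V, S.card = k ∧ kappaS D ↑S = m}

/-- The number of arcs of a digraph. -/
noncomputable def arcCount (D : Dgraph V) : ℕ :=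
  Nat.card {p : V × V // D.Arc p.1 p.2}

/-- Delete the arc `e` from `D`. -/
def deleteArc (D : Dgraph V) (e : V × V) : Dgraph V where
  Arc u v := D.Arc u v ∧ (u, v) ≠ e
  loopless v h := D.loopless v h.1

/-- `D` is minimally strong subgraph `(k,ℓ)`-connected. -/
noncomputable def MinSSC [Fintype V] (D : Dgraph V) (k ℓ : ℕ) : Prop :=
  ℓ ≤ kappa D k ∧ ∀ e : V × V, D.Arc e.1 e.2 → kappa (deleteArc D e) k ≤ ℓ - 1

/-- Minimum out-degree `δ⁺(D)`. -/
noncomputable def minOutDeg [Fintype V] (D : Dgraph V) : ℕ :=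
  sInf (Set.range fun v => Nat.card {w : V // D.Arc v w})

/-- Minimum in-degree `δ⁻(D)`. -/
noncomputable def minInDeg [Fintype V] (D : Dgraph V) : ℕ :=
  sInf (Set.range fun v => Nat.card {w : V // D.Arc w v})

/-- The subdigraph of `D` induced on a vertex set `W`. -/
def induce (D : Dgraph V) (W : Set V) : Dgraph W where
  Arc u v := D.Arc u v
  loopless v h := D.loopless v h

/-- The strong vertex-connectivity `κ(D)`: the minimum number of vertices whose
removal leaves a non-strong digraph, or `n - 1` if there is no such set. -/
noncomputable def vertConn [Fintype V] (D : Dgraph V) : ℕ :=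
  sInf ({Fintype.card V - 1} ∪
    {m : ℕ | ∃ Q : Finset V, Q.card = m ∧ ¬ IsStrong (D.induce (↑Q : Set V)ᶜ)})

/-- `D` is symmetric if the reverse of every arc is an arc. -/
def IsSymmetric (D : Dgraph V) : Prop := ∀ u v, D.Arc u v → D.Arc v u

/-- The underlying undirected (simple) graph of a digraph. -/
def underlying (D : Dgraph V) : SimpleGraph V where
  Adj u v := D.Arc u v ∨ D.Arc v u
  symm := by constructor; intro u v h; tauto
  loopless := by constructor; intro v h; rcases h with h | h <;> exact D.loopless v h

/-- The minimum number of arcs of a minimally strong subgraph `(k,ℓ)`-connected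
digraph on `n` vertices. -/
noncomputable def fMin (n k ℓ : ℕ) : ℕ :=
  sInf {m : ℕ | ∃ D : Dgraph (Fin n), MinSSC D k ℓ ∧ arcCount D = m}

/-- The maximum number of arcs of a minimally strong subgraph `(k,ℓ)`-connected
digraph on `n` vertices. -/
noncomputable def FMax (n k ℓ : ℕ) : ℕ :=
  sSup {m : ℕ | ∃ D : Dgraph (Fin n), MinSSC D k ℓ ∧ arcCount D = m}

end Dgraph

/-!
Every strong subgraph containing two vertices `u ≠ v` of `S` must enter and leave `v`, and
internally disjoint subgraphs share no arcs, so a packing of `p` of them yields `p` distinct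
in-arcs and `p` distinct out-arcs at `v`. Choosing `S ∋ v` with `v` of minimum in- (out-)degree
gives the bound; the out-degree case is the in-degree case in the reverse digraph.
-/

namespace Dgraph

variable {V : Type}

def reverse (D : Dgraph V) : Dgraph V where
  Arc u v := D.Arc v u
  loopless := D.loopless

def IsPacking (D : Dgraph V) (S : Set V) {p : ℕ} (f : Fin p → StrongSub D) : Prop :=
  (∀ i, S ⊆ (f i).verts) ∧
  (∀ i j, i ≠ j → (f i).verts ∩ (f j).verts = S) ∧
  (∀ i j, i ≠ j → ∀ u v, ¬ ((f i).Arc u v ∧ (f j).Arc u v))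

theorem kappaS_le_of_forall_isPacking {D : Dgraph V} {S : Set V} {N : ℕ}
    (h : ∀ p (f : Fin p → StrongSub D), D.IsPacking S f → p ≤ N) : D.kappaS S ≤ N :=
  csSup_le ⟨0, Fin.elim0, fun i => i.elim0, fun i => i.elim0, fun i => i.elim0⟩
    fun p ⟨f, hf⟩ => h p f hf

namespace StrongSub

variable {D : Dgraph V}

def reverse (H : StrongSub D) : StrongSub D.reverse where
  verts := H.verts
  Arc u v := H.Arc v u
  arc_sub u v h := H.arc_sub v u h
  arc_mem u v h := (H.arc_mem v u h).symm
  strong u hu v hv := (H.strong v hv u hu).swap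

theorem exists_arc_into (H : StrongSub D) {u v : V} (hu : u ∈ H.verts) (hv : v ∈ H.verts)
    (huv : u ≠ v) : ∃ w, H.Arc w v := by
  rcases (H.strong u hu v hv).cases_tail with h | ⟨w, -, hw⟩
  · exact absurd h.symm huv
  · exact ⟨w, hw⟩

end StrongSub

theorem IsPacking.reverse {D : Dgraph V} {S : Set V} {p : ℕ} {f : Fin p → StrongSub D}
    (hf : D.IsPacking S f) : D.reverse.IsPacking S fun i => (f i).reverse :=
  ⟨hf.1, hf.2.1, fun i j hij u v => hf.2.2 i j hij v u⟩

theorem IsPacking.card_le_inDeg [Finite V] {D : Dgraph V} {S : Set V} {p : ℕ}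
    {f : Fin p → StrongSub D} (hf : D.IsPacking S f) {u v : V} (hu : u ∈ S) (hv : v ∈ S)
    (huv : u ≠ v) :
    p ≤ Nat.card {w : V // D.Arc w v} := by
  choose g hg using fun i => (f i).exists_arc_into (hf.1 i hu) (hf.1 i hv) huv
  have hinj :
      Function.Injective fun i => (⟨g i, (f i).arc_sub _ _ (hg i)⟩ : {w // D.Arc w v}) := by
    intro i j heq
    by_contra hij
    have hgij : g i = g j := congrArg Subtype.val heq
    exact hf.2.2 i j hij (g i) v ⟨hg i, hgij ▸ hg j⟩
  simpa using Nat.card_le_card_of_injective _ hinj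

theorem kappaS_le_inDeg [Finite V] (D : Dgraph V) {S : Set V} (hS : S.Nontrivial) {v : V}
    (hv : v ∈ S) :
    D.kappaS S ≤ Nat.card {w : V // D.Arc w v} := by
  obtain ⟨u, hu, huv⟩ := hS.exists_ne v
  exact kappaS_le_of_forall_isPacking fun _ _ hf => hf.card_le_inDeg hu hv huv

theorem kappaS_le_outDeg [Finite V] (D : Dgraph V) {S : Set V} (hS : S.Nontrivial) {v : V}
    (hv : v ∈ S) :
    D.kappaS S ≤ Nat.card {w : V // D.Arc v w} := by
  obtain ⟨u, hu, huv⟩ := hS.exists_ne v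
  exact kappaS_le_of_forall_isPacking fun _ _ hf => hf.reverse.card_le_inDeg hu hv huv

theorem kappa_le_of_forall_kappaS_le [Fintype V] (D : Dgraph V) {k : ℕ} (hk2 : 2 ≤ k)
    (hkn : k ≤ Fintype.card V) (v : V) {N : ℕ}
    (h : ∀ S : Set V, S.Nontrivial → v ∈ S → D.kappaS S ≤ N) : D.kappa k ≤ N := by
  obtain ⟨S, hvS, hS⟩ :=
    Finset.exists_superset_card_eq (s := {v}) (by rw [Finset.card_singleton]; omega) hkn
  have hS_nontrivial : (S : Set V).Nontrivial :=
    Finset.one_lt_card_iff_nontrivial.mp (by omega)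
  have hle : D.kappa k ≤ D.kappaS S := Nat.sInf_le ⟨S, hS, rfl⟩
  exact hle.trans (h S hS_nontrivial (by simpa using hvS))

end Dgraph

/-- For any digraph `D` and `2 ≤ k ≤ n`, `κ_k(D) ≤ min {δ⁻(D), δ⁺(D)}`. -/
theorem stmt1 {V : Type} [Fintype V] (D : Dgraph V) (k : ℕ)
    (hk2 : 2 ≤ k) (hkn : k ≤ Fintype.card V) :
    D.kappa k ≤ min D.minInDeg D.minOutDeg := by
  have : Nonempty V := Fintype.card_pos_iff.mp (by omega)
  refine le_min ?_ ?_
  · obtain ⟨v, hv⟩ := Nat.sInf_mem (Set.range_nonempty fun v => Nat.card {w : V // D.Arc w v})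
    rw [Dgraph.minInDeg, ← hv]
    exact D.kappa_le_of_forall_kappaS_le hk2 hkn v fun S hS hvS => D.kappaS_le_inDeg hS hvS
  · obtain ⟨v, hv⟩ := Nat.sInf_mem (Set.range_nonempty fun v => Nat.card {w : V // D.Arc v w})
    rw [Dgraph.minOutDeg, ← hv]
    exact D.kappa_le_of_forall_kappaS_le hk2 hkn v fun S hS hvS => D.kappaS_le_outDeg hS hvS
end

section
/- For any digraph D on n vertices and any integer k with 2 ≤ k ≤ n and n ≥ κ(D)+k, we have κ_k(D) ≤ κ(D), where κ(D) denotes the (vertex) strong connectivity of D. -/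
/-!
Take a minimum vertex cut `Q` of `D`, so `|Q| = κ(D)`, together with vertices `u, v ∉ Q` such
that `v` is unreachable from `u` in `D - Q`. Since `n ≥ κ(D) + k`, the pair `{u, v}` extends to a
`k`-set `S` avoiding `Q`. Every strong subgraph containing `S` contains a `u`–`v` path, which must
pass through `Q`; internally disjoint such subgraphs meet `Q` in distinct vertices, as they share
only the vertices of `S`. Hence `κ_k(D) ≤ κ_S(D) ≤ |Q| = κ(D)`.
-/

open Relation

namespace Dgraph

variable {V : Type} {D : Dgraph V}

theorem exists_not_isStrong_induce_of_vertConn_lt [Fintype V]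
    (h : D.vertConn < Fintype.card V - 1) :
    ∃ Q : Finset V, Q.card = D.vertConn ∧ ¬ (D.induce (↑Q : Set V)ᶜ).IsStrong := by
  have hmem : D.vertConn ∈ _ :=
    Nat.sInf_mem (Set.union_nonempty.2 (.inl (Set.singleton_nonempty _)))
  rcases hmem with hn | hQ
  · exact absurd (Set.mem_singleton_iff.mp hn) h.ne
  · exact hQ

namespace StrongSub

theorem reflTransGen_induce (H : D.StrongSub) {W : Set V} (hW : H.verts ⊆ W) {u v : W}
    (hu : (u : V) ∈ H.verts) (hv : (v : V) ∈ H.verts) :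
    ReflTransGen (D.induce W).Arc u v := by
  suffices ∀ b, ReflTransGen H.Arc u b → ∀ hb : b ∈ W,
      ReflTransGen (D.induce W).Arc u ⟨b, hb⟩ from this v (H.strong _ hu _ hv) v.2
  intro b hub
  induction hub with
  | refl => exact fun _ => .refl
  | tail _ hab ih => exact fun _ => (ih (hW (H.arc_mem _ _ hab).1)).tail (H.arc_sub _ _ hab)

theorem exists_mem_verts_of_not_reachable (H : D.StrongSub) {Q : Set V} {u v : ↥Qᶜ}
    (huv : ¬ ReflTransGen (D.induce Qᶜ).Arc u v)
    (hu : (u : V) ∈ H.verts) (hv : (v : V) ∈ H.verts) : ∃ q ∈ H.verts, q ∈ Q := by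
  by_contra! hQ
  exact huv (H.reflTransGen_induce hQ hu hv)

end StrongSub

theorem kappaS_le_card_of_not_reachable (Q : Finset V) {S : Set V} (hS : S ⊆ (↑Q : Set V)ᶜ)
    {u v : ↥(↑Q : Set V)ᶜ} (hu : (u : V) ∈ S) (hv : (v : V) ∈ S)
    (huv : ¬ ReflTransGen (D.induce (↑Q : Set V)ᶜ).Arc u v) :
    D.kappaS S ≤ Q.card := by
  refine csSup_le' ?_
  rintro p ⟨f, hSf, hinter, -⟩
  choose q hqf hqQ using fun i =>
    (f i).exists_mem_verts_of_not_reachable huv (hSf i hu) (hSf i hv)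
  have hq_inj : Set.InjOn q (Finset.univ : Finset (Fin p)) := by
    intro i _ j _ hij
    by_contra hne
    have hqS : q i ∈ S := hinter i j hne ▸ ⟨hqf i, hij ▸ hqf j⟩
    exact hS hqS (hqQ i)
  simpa using Finset.card_le_card_of_injOn q (fun i _ => hqQ i) hq_inj

end Dgraph

theorem stmt2_general {V : Type} [Fintype V] (D : Dgraph V) (k : ℕ)
    (hk2 : 2 ≤ k)
    (hn : D.vertConn + k ≤ Fintype.card V) :
    D.kappa k ≤ D.vertConn := by
  classical
  obtain ⟨Q, hQ, hcut⟩ := D.exists_not_isStrong_induce_of_vertConn_lt (by omega)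
  obtain ⟨u, v, huv⟩ : ∃ u v, ¬ ReflTransGen (D.induce (↑Q : Set V)ᶜ).Arc u v := by
    simpa [Dgraph.IsStrong] using hcut
  have hne : (u : V) ≠ v := fun h => huv (Subtype.ext h ▸ .refl)
  have huvQ : ({(u : V), (v : V)} : Finset V) ⊆ Qᶜ :=
    Finset.insert_subset_iff.2
      ⟨Finset.mem_compl.2 u.2, Finset.singleton_subset_iff.2 (Finset.mem_compl.2 v.2)⟩
  obtain ⟨S, huvS, hSQ, hS⟩ := Finset.exists_subsuperset_card_eq (n := k) huvQ
    (by rwa [Finset.card_pair hne]) (by rw [Finset.card_compl]; omega)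
  calc D.kappa k ≤ D.kappaS ↑S := Nat.sInf_le ⟨S, hS, rfl⟩
    _ ≤ Q.card := D.kappaS_le_card_of_not_reachable Q (fun x hx => Finset.mem_compl.1 (hSQ hx))
        (huvS (by simp)) (huvS (by simp)) huv
    _ = D.vertConn := hQ

/-- For any digraph `D` on `n` vertices, `2 ≤ k ≤ n` and `n ≥ κ(D) + k`,
`κ_k(D) ≤ κ(D)`. -/
theorem stmt2 {V : Type} [Fintype V] (D : Dgraph V) (k : ℕ)
    (hk2 : 2 ≤ k) (hkn : k ≤ Fintype.card V)
    (hn : D.vertConn + k ≤ Fintype.card V) :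
    D.kappa k ≤ D.vertConn :=
  stmt2_general D k hk2 hn
end
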